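/- Let n ≥ 3 be an integer, t > 0 and z ∈ ℝⁿ. Then the standard bubble satisfies the Yamabe equation on ℝⁿ: −∑_{i=1}^n ∂²B_{t,z}/∂x_i²(x) = B_{t,z}(x)^{2*−1} = B_{t,z}(x)^{(n+2)/(n−2)} for all x ∈ ℝⁿ. -/

import Mathlib

/-!
For a radial profile `g`, the sum of the pure second partials of `y ↦ g ‖y - z‖²` at `x` is
`2n g'(s) + 4s g''(s)` with `s = ‖x - z‖²`. The bubble is `t^p q^{-p}` with `p = (n-2)/2` and
`q = t² + s/(n(n-2))`; since `2(p+1) = n` and `2pn = n(n-2)`, this sum collapses to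
`-t^{p+2} q^{-p-2} = -(t^p q^{-p})^{(p+2)/p}`, and `(p+2)/p = (n+2)/(n-2)`.
-/

open MeasureTheory Real

noncomputable section

/-- The Euclidean space `ℝⁿ`. -/
abbrev En (n : ℕ) := EuclideanSpace ℝ (Fin n)

/-- Partial derivative in the `i`-th coordinate direction. -/
noncomputable def pd {n : ℕ} (i : Fin n) (f : En n → ℝ) (x : En n) : ℝ :=
  fderiv ℝ f x (EuclideanSpace.single i 1)

/-- The standard bubble `B_{t,z}(x) = t^{(n-2)/2} (t² + |x-z|²/(n(n-2)))^{-(n-2)/2}`. -/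
noncomputable def Bub (n : ℕ) (t : ℝ) (z x : En n) : ℝ :=
  t ^ (((n : ℝ) - 2) / 2) *
    (t ^ 2 + ‖x - z‖ ^ 2 / ((n : ℝ) * ((n : ℝ) - 2))) ^ (-(((n : ℝ) - 2) / 2))

lemma hasFDerivAt_norm_sub_sq {n : ℕ} (z x : En n) :
    HasFDerivAt (fun y : En n => ‖y - z‖ ^ 2) (2 • innerSL ℝ (x - z)) x := by
  simpa using ((hasFDerivAt_id x).sub_const z).norm_sq

section RadialLaplacian

variable {n : ℕ} {z x : En n}

lemma pd_comp_norm_sub_sq {g g' : ℝ → ℝ} (i : Fin n)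
    (hg : HasDerivAt g (g' (‖x - z‖ ^ 2)) (‖x - z‖ ^ 2)) :
    pd i (fun y => g (‖y - z‖ ^ 2)) x = 2 * g' (‖x - z‖ ^ 2) * (x i - z i) := by
  have h : HasFDerivAt (fun y => g (‖y - z‖ ^ 2)) _ x :=
    hg.comp_hasFDerivAt x (hasFDerivAt_norm_sub_sq z x)
  rw [pd, h.fderiv]
  simp only [map_sub, smul_apply, sub_apply, coe_innerSL_apply, EuclideanSpace.inner_single_right,
    ringHom_apply, one_mul, nsmul_eq_mul, Nat.cast_ofNat, smul_eq_mul]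
  ring

lemma pd_pd_comp_norm_sub_sq {g g' g'' : ℝ → ℝ} (i : Fin n)
    (hg : ∀ s, 0 ≤ s → HasDerivAt g (g' s) s) (hg' : ∀ s, 0 ≤ s → HasDerivAt g' (g'' s) s) :
    pd i (fun y => pd i (fun y => g (‖y - z‖ ^ 2)) y) x =
      4 * g'' (‖x - z‖ ^ 2) * (x i - z i) ^ 2 + 2 * g' (‖x - z‖ ^ 2) := by
  have hpd : (fun y => pd i (fun y => g (‖y - z‖ ^ 2)) y) =
      fun y => 2 * g' (‖y - z‖ ^ 2) * (y i - z i) :=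
    funext fun y => pd_comp_norm_sub_sq i (hg _ (by positivity))
  have hcoord : HasFDerivAt (fun y : En n => y i - z i) (EuclideanSpace.proj i : En n →L[ℝ] ℝ) x :=
    (EuclideanSpace.proj i : En n →L[ℝ] ℝ).hasFDerivAt.sub_const (z i)
  have h : HasFDerivAt (fun y => 2 * g' (‖y - z‖ ^ 2) * (y i - z i)) _ x :=
    (((hg' _ (by positivity)).comp_hasFDerivAt x (hasFDerivAt_norm_sub_sq z x)).const_mul 2).mul
      hcoord
  rw [hpd, pd, h.fderiv]
  simp only [Function.comp_apply, map_sub, add_apply, smul_apply, PiLp.proj_apply,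
    PiLp.single_eq_same, smul_eq_mul, mul_one, sub_apply, coe_innerSL_apply,
    EuclideanSpace.inner_single_right, ringHom_apply, one_mul, nsmul_eq_mul, Nat.cast_ofNat]
  ring

theorem sum_pd_pd_comp_norm_sub_sq {g g' g'' : ℝ → ℝ}
    (hg : ∀ s, 0 ≤ s → HasDerivAt g (g' s) s) (hg' : ∀ s, 0 ≤ s → HasDerivAt g' (g'' s) s) :
    ∑ i, pd i (fun y => pd i (fun y => g (‖y - z‖ ^ 2)) y) x =
      2 * n * g' (‖x - z‖ ^ 2) + 4 * ‖x - z‖ ^ 2 * g'' (‖x - z‖ ^ 2) := by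
  rw [Finset.sum_congr rfl fun i _ => pd_pd_comp_norm_sub_sq i hg hg',
    EuclideanSpace.real_norm_sq_eq]
  simp only [PiLp.sub_apply, Finset.sum_add_distrib, ← Finset.mul_sum, Finset.sum_const,
    Finset.card_univ, Fintype.card_fin, nsmul_eq_mul]
  ring

lemma hasDerivAt_const_mul_rpow_affine (c a b r s : ℝ) (h : a + b * s ≠ 0) :
    HasDerivAt (fun s => c * (a + b * s) ^ r) (c * r * b * (a + b * s) ^ (r - 1)) s := by
  have h' := (((hasDerivAt_id' s).const_mul b).const_add a).rpow_const (p := r) (Or.inl h)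
  exact (h'.const_mul c).congr_deriv (by ring)

theorem sum_pd_pd_const_mul_rpow_affine_norm_sub_sq {c a b r : ℝ}
    (hpos : ∀ s, 0 ≤ s → a + b * s ≠ 0) :
    ∑ i, pd i (fun y => pd i (fun y => c * (a + b * ‖y - z‖ ^ 2) ^ r) y) x =
      c * r * b * (a + b * ‖x - z‖ ^ 2) ^ (r - 2) *
        (2 * n * (a + b * ‖x - z‖ ^ 2) + 4 * (r - 1) * b * ‖x - z‖ ^ 2) := by
  rw [sum_pd_pd_comp_norm_sub_sq (fun s hs => hasDerivAt_const_mul_rpow_affine c a b r s (hpos s hs))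
    (fun s hs => hasDerivAt_const_mul_rpow_affine (c * r * b) a b (r - 1) s (hpos s hs)),
    show r - 1 - 1 = r - 2 by ring, show r - 1 = r - 2 + 1 by ring, rpow_add_one (hpos _ (by positivity))]
  ring

end RadialLaplacian

lemma rpow_mul_rpow_neg_rpow_add_two_div {t q p : ℝ} (ht : 0 < t) (hq : 0 < q) (hp : p ≠ 0) :
    (t ^ p * q ^ (-p)) ^ ((p + 2) / p) = t ^ p * t ^ 2 * q ^ (-p - 2) := by
  rw [mul_rpow (rpow_nonneg ht.le _) (rpow_nonneg hq.le _), ← rpow_mul ht.le, ← rpow_mul hq.le,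
    show p * ((p + 2) / p) = p + 2 by field_simp,
    show -p * ((p + 2) / p) = -p - 2 by field_simp; ring, rpow_add ht, rpow_two]

lemma Bub_eq (n : ℕ) (t : ℝ) (z : En n) :
    Bub n t z = fun y => t ^ (((n : ℝ) - 2) / 2) *
      (t ^ 2 + ((n : ℝ) * ((n : ℝ) - 2))⁻¹ * ‖y - z‖ ^ 2) ^ (-(((n : ℝ) - 2) / 2)) := by
  funext y
  rw [Bub, div_eq_inv_mul (‖y - z‖ ^ 2)]

theorem stmt1 (n : ℕ) (hn : 3 ≤ n) (t : ℝ) (ht : 0 < t) (z : En n) (x : En n) :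
    -(∑ i : Fin n, pd i (fun y => pd i (Bub n t z) y) x) =
      Bub n t z x ^ (((n : ℝ) + 2) / ((n : ℝ) - 2)) := by
  have hn2 : (2 : ℝ) < n := by exact_mod_cast hn
  set p := ((n : ℝ) - 2) / 2 with hp
  set N := (n : ℝ) * ((n : ℝ) - 2) with hN
  have hq_pos : ∀ s, 0 ≤ s → 0 < t ^ 2 + N⁻¹ * s := fun s hs => by
    have : 0 < N := mul_pos (by linarith) (by linarith)
    positivity
  set q := t ^ 2 + N⁻¹ * ‖x - z‖ ^ 2 with hq_def
  have hnorm : ‖x - z‖ ^ 2 = N * (q - t ^ 2) := by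
    rw [hq_def, mul_sub, mul_add, mul_inv_cancel_left₀ (by positivity)]
    ring
  have hexp : (n + 2) / (n - 2) = (p + 2) / p := by rw [hp]; field_simp; ring
  rw [Bub_eq, sum_pd_pd_const_mul_rpow_affine_norm_sub_sq fun s hs => (hq_pos s hs).ne',
    hexp, rpow_mul_rpow_neg_rpow_add_two_div ht (hq_pos _ (by positivity)) (by linarith), ← hq_def,
    hnorm]
  have hcoef : -p * N⁻¹ * (2 * n * q + 4 * (-p - 1) * N⁻¹ * (N * (q - t ^ 2))) = -t ^ 2 := by
    have hn0 : (n : ℝ) ≠ 0 := by linarith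
    have hn2' : (n : ℝ) - 2 ≠ 0 := by linarith
    rw [hp, hN]
    field_simp
    ring
  linear_combination (-(t ^ p * q ^ (-p - 2))) * hcoef
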